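/- arXiv:2007.11217 — 3 statements merged into one kernel-verified Lean document; each statement's English description precedes it below -/
import Mathlib

section
/- Let f be a bounded holomorphic function on the open unit disk 𝔻 such that the kernel K(λ, z) = (1 − conj(f(λ))·f(z))² / (1 − conj(λ)·z)² is positive semi-definite and f is not constant. Then the image f(𝔻) does not intersect the unit circle {w ∈ ℂ : |w| = 1}. -/
open Complex Metric ComplexOrder

/-- A kernel `K` on the open unit disk is positive semi-definite if for every finite
family of points in the disk and complex coefficients, the associated quadratic form
is a nonnegative real number (using the partial order on `ℂ`). -/
def IsPSDKernelOnDisk (K : ℂ → ℂ → ℂ) : Prop :=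
  ∀ (n : ℕ) (lam : Fin n → ℂ), (∀ i, ‖lam i‖ < 1) →
    ∀ c : Fin n → ℂ,
      0 ≤ ∑ i, ∑ j, (starRingEnd ℂ) (c i) * c j * K (lam i) (lam j)

open ComplexConjugate

/-! If `|f(λ)| = 1` then `K(λ, λ) = 0`, and positivity of the `2 × 2` compressions of `K` forces
`K(λ, z) = 0` for every `z` in the disk. As the denominator `(1 - conj λ z)²` does not vanish,
`conj (f λ) f(z) = 1 = conj (f λ) f(λ)`, so `f` is constant. -/

lemma Complex.eq_zero_of_forall_nonneg_ofReal_mul_add {v d : ℂ}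
    (h : ∀ t : ℝ, 0 ≤ (t : ℂ) * v + d) : v = 0 := by
  have hre : ∀ t : ℝ, 0 ≤ t * v.re + d.re := fun t => by
    simpa using (Complex.le_def.mp (h t)).1
  have him : ∀ t : ℝ, t * v.im + d.im = 0 := fun t => by
    simpa using (Complex.le_def.mp (h t)).2.symm
  have hvim : v.im = 0 := by linarith [him 0, him 1]
  have hvre : v.re = 0 := by
    by_contra hv
    have h1 := hre (-(d.re + 1) / v.re)
    rw [div_mul_cancel₀ _ hv] at h1
    linarith
  exact Complex.ext hvre hvim

lemma Complex.eq_zero_of_forall_nonneg_conj_mul_add_mul_add {b b' d : ℂ}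
    (h : ∀ w : ℂ, 0 ≤ conj w * b + w * b' + d) : b = 0 := by
  have hsum : b + b' = 0 := eq_zero_of_forall_nonneg_ofReal_mul_add (d := d) fun t => by
    convert h t using 1
    rw [conj_ofReal]
    ring
  have hdiff : I * (b' - b) = 0 := eq_zero_of_forall_nonneg_ofReal_mul_add (d := d) fun t => by
    convert h (t * I) using 1
    rw [map_mul, conj_ofReal, conj_I]
    ring
  have hb'b : b' = b := sub_eq_zero.mp ((mul_eq_zero.mp hdiff).resolve_left I_ne_zero)
  rw [hb'b] at hsum
  linear_combination hsum / 2

theorem IsPSDKernelOnDisk.eq_zero_of_apply_self_eq_zero {K : ℂ → ℂ → ℂ}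
    (hK : IsPSDKernelOnDisk K) {a z : ℂ} (ha : ‖a‖ < 1) (hz : ‖z‖ < 1) (haa : K a a = 0) :
    K a z = 0 := by
  have hmem : ∀ i, ‖(![a, z] : Fin 2 → ℂ) i‖ < 1 := fun i => by
    fin_cases i
    exacts [ha, hz]
  refine eq_zero_of_forall_nonneg_conj_mul_add_mul_add (b' := K z a) (d := K z z) fun w => ?_
  have h := hK 2 ![a, z] hmem ![w, 1]
  simp only [Fin.sum_univ_two, Matrix.cons_val_zero, Matrix.cons_val_one, map_one, one_mul,
    mul_one, haa, mul_zero, zero_add] at h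
  simpa only [add_assoc] using h

lemma Complex.one_sub_conj_mul_ne_zero {a z : ℂ} (ha : ‖a‖ < 1) (hz : ‖z‖ < 1) :
    1 - conj a * z ≠ 0 := by
  intro h
  have hnorm : ‖conj a * z‖ = 1 := by rw [← sub_eq_zero.mp h, norm_one]
  rw [norm_mul, norm_conj] at hnorm
  nlinarith [norm_nonneg a, norm_nonneg z]

theorem image_misses_circle_of_psd_of_nonconstant_general
    (f : ℂ → ℂ)
    (hpsd : IsPSDKernelOnDisk (fun lam z =>
        (1 - (starRingEnd ℂ) (f lam) * f z) ^ 2 / (1 - (starRingEnd ℂ) lam * z) ^ 2))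
    (hnc : ¬ ∃ c : ℂ, ∀ z ∈ ball (0 : ℂ) 1, f z = c) :
    ∀ lam ∈ ball (0 : ℂ) 1, ‖f lam‖ ≠ 1 := by
  intro l hl hone
  rw [mem_ball_zero_iff] at hl
  have hconj : conj (f l) = (f l)⁻¹ := (inv_eq_conj hone).symm
  have hfl : f l ≠ 0 := norm_ne_zero_iff.mp (by rw [hone]; exact one_ne_zero)
  refine hnc ⟨f l, fun z hz => ?_⟩
  rw [mem_ball_zero_iff] at hz
  have hdiag : (1 - conj (f l) * f l) ^ 2 / (1 - conj l * l) ^ 2 = 0 := by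
    rw [hconj, inv_mul_cancel₀ hfl]
    simp
  have hoff := hpsd.eq_zero_of_apply_self_eq_zero hl hz hdiag
  rw [div_eq_zero_iff, or_iff_left (pow_ne_zero 2 (one_sub_conj_mul_ne_zero hl hz)),
    sq_eq_zero_iff, sub_eq_zero, hconj, eq_comm, inv_mul_eq_one₀ hfl] at hoff
  exact hoff.symm

/-- If the kernel `(1 - conj (f λ) * f z)² / (1 - conj λ * z)²` is positive
semi-definite and `f` is not constant on the disk, then `f(𝔻)` does not meet the
unit circle. -/
theorem image_misses_circle_of_psd_of_nonconstant
    (f : ℂ → ℂ) (hf : DifferentiableOn ℂ f (ball (0 : ℂ) 1))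
    (hb : ∃ M : ℝ, ∀ z ∈ ball (0 : ℂ) 1, ‖f z‖ ≤ M)
    (hpsd : IsPSDKernelOnDisk (fun lam z =>
        (1 - (starRingEnd ℂ) (f lam) * f z) ^ 2 / (1 - (starRingEnd ℂ) lam * z) ^ 2))
    (hnc : ¬ ∃ c : ℂ, ∀ z ∈ ball (0 : ℂ) 1, f z = c) :
    ∀ lam ∈ ball (0 : ℂ) 1, ‖f lam‖ ≠ 1 :=
  image_misses_circle_of_psd_of_nonconstant_general f hpsd hnc
end

section
/- Let f be a bounded holomorphic function on the open unit disk 𝔻 with 1 < |f(λ)| ≤ √2 for all λ ∈ 𝔻. Then both kernels K₁(λ, z) = (2·conj(f(λ))·f(z) − conj(f(λ))²·f(z)²) / (1 − conj(λ)·z)² and K₂(λ, z) = (1 − 2·conj(f(λ))·f(z) + conj(f(λ))²·f(z)²) / (1 − conj(λ)·z)² are positive semi-definite on 𝔻. -/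
open Complex Metric ComplexOrder

/-!
With `g = f / √2` and `h = 1 / f`, holomorphic maps of the disk into the closed unit disk,
`K₁(λ, z) = conj(√2 f(λ)) √2 f(z) · P_g(λ, z) · P_0(λ, z)` and
`K₂(λ, z) = conj(f(λ)²) f(z)² · P_h(λ, z)²`, where `P_g(λ, z) = (1 - conj(g(λ)) g(z)) / (1 - λ̄ z)`
is the Pick kernel. Rank-one kernels are positive, and so are products of positive kernels (Schur);
so everything reduces to Pick's theorem, the positivity of `P_g` for holomorphic `g` with `|g| ≤ 1`.

For `g` holomorphic on the closed disk, pair functions on the unit circle by `⟨p, q⟩ = ∫ p̄ q dθ`.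
Cauchy's formula says that the Szegő functions `k_μ(z) = (1 - μ̄ z)⁻¹` reproduce values,
`⟨k_μ, H⟩ = 2π H(μ)`. Hence `u = Σ c̄ᵢ k_{λᵢ}` and `v = Σ conj(cᵢ g(λᵢ)) k_{λᵢ}` satisfy
`⟨u, g v⟩ = ⟨v, v⟩`, while `|g| ≤ 1` on the circle gives `2 Re ⟨u, g v⟩ ≤ ⟨u, u⟩ + ⟨v, v⟩`.
So `⟨v, v⟩ ≤ ⟨u, u⟩`, and `⟨u, u⟩ - ⟨v, v⟩` is `2π` times the Pick form. A general `g` is the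
limit of `z ↦ g(r z)` as `r → 1`.
-/

open ComplexConjugate Filter Topology Matrix

theorem Matrix.posSemidef_of_forall_dotProduct_mulVec_nonneg {n : Type*} [Fintype n]
    {M : Matrix n n ℂ} (h : ∀ x, 0 ≤ star x ⬝ᵥ M *ᵥ x) : M.PosSemidef := by
  classical
  rw [← Matrix.isPositive_toEuclideanLin_iff, LinearMap.isPositive_iff_complex]
  intro x
  have hx : 0 ≤ inner ℂ x (M.toEuclideanLin x) := by
    simpa [EuclideanSpace.inner_eq_star_dotProduct, dotProduct_comm] using h x
  rw [← inner_conj_symm, eq_re_of_ofReal_le hx]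
  exact ⟨by simp, by simpa using (Complex.nonneg_iff.mp hx).1⟩

theorem Matrix.star_dotProduct_mulVec_eq_sum {n : Type*} [Fintype n] (M : Matrix n n ℂ)
    (x : n → ℂ) : star x ⬝ᵥ M *ᵥ x = ∑ i, ∑ j, conj (x i) * x j * M i j := by
  simp only [dotProduct, mulVec, Finset.mul_sum, Pi.star_apply, RCLike.star_def]
  exact Finset.sum_congr rfl fun i _ => Finset.sum_congr rfl fun j _ => by ring

theorem isPSDKernelOnDisk_iff_posSemidef {K : ℂ → ℂ → ℂ} :
    IsPSDKernelOnDisk K ↔ ∀ n (lam : Fin n → ℂ), (∀ i, ‖lam i‖ < 1) →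
      (Matrix.of fun i j => K (lam i) (lam j)).PosSemidef := by
  refine forall₃_congr fun n lam _ => ?_
  have hform (c : Fin n → ℂ) :=
    Matrix.star_dotProduct_mulVec_eq_sum (.of fun i j => K (lam i) (lam j)) c
  simp only [of_apply] at hform
  simp_rw [← hform]
  exact ⟨Matrix.posSemidef_of_forall_dotProduct_mulVec_nonneg, PosSemidef.dotProduct_mulVec_nonneg⟩

namespace IsPSDKernelOnDisk

variable {K L : ℂ → ℂ → ℂ}

theorem congr (hK : IsPSDKernelOnDisk K) (h : ∀ a b, ‖a‖ < 1 → ‖b‖ < 1 → K a b = L a b) :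
    IsPSDKernelOnDisk L := fun n lam hlam c => by
  simpa only [h _ _ (hlam _) (hlam _)] using hK n lam hlam c

theorem mul (hK : IsPSDKernelOnDisk K) (hL : IsPSDKernelOnDisk L) :
    IsPSDKernelOnDisk fun a b => K a b * L a b := by
  rw [isPSDKernelOnDisk_iff_posSemidef] at *
  exact fun n lam hlam => (hK n lam hlam).hadamard (hL n lam hlam)

end IsPSDKernelOnDisk

theorem isPSDKernelOnDisk_conj_mul (h : ℂ → ℂ) :
    IsPSDKernelOnDisk fun a b => conj (h a) * h b := by
  rw [isPSDKernelOnDisk_iff_posSemidef]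
  exact fun n lam _ => posSemidef_vecMulVec_star_self fun i => h (lam i)

noncomputable def circlePairing (p q : ℂ → ℂ) : ℂ :=
  ∫ θ in (0)..(2 * Real.pi), conj (p (circleMap 0 1 θ)) * q (circleMap 0 1 θ)

section CirclePairing

variable {p q g : ℂ → ℂ}

theorem continuous_comp_circleMap (hp : ContinuousOn p (sphere 0 1)) :
    Continuous fun θ => p (circleMap 0 1 θ) :=
  hp.comp_continuous (continuous_circleMap 0 1) (circleMap_mem_sphere 0 zero_le_one)

theorem intervalIntegrable_conj_mul_comp_circleMap (hp : ContinuousOn p (sphere 0 1))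
    (hq : ContinuousOn q (sphere 0 1)) :
    IntervalIntegrable (fun θ => conj (p (circleMap 0 1 θ)) * q (circleMap 0 1 θ))
      MeasureTheory.volume 0 (2 * Real.pi) :=
  ((continuous_conj.comp (continuous_comp_circleMap hp)).mul
    (continuous_comp_circleMap hq)).intervalIntegrable _ _

theorem circlePairing_self (p : ℂ → ℂ) :
    circlePairing p p = ↑(∫ θ in (0)..(2 * Real.pi), ‖p (circleMap 0 1 θ)‖ ^ 2) := by
  simp_rw [circlePairing, Complex.conj_mul', ← ofReal_pow, intervalIntegral.integral_ofReal]

theorem two_mul_re_conj_mul_mul_le {a b c : ℂ} (hb : ‖b‖ ≤ 1) :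
    2 * (conj a * (b * c)).re ≤ ‖a‖ ^ 2 + ‖c‖ ^ 2 :=
  calc 2 * (conj a * (b * c)).re ≤ 2 * (‖a‖ * ‖c‖ * ‖b‖) := by
        gcongr
        refine (re_le_norm _).trans_eq ?_
        rw [norm_mul, norm_mul, Complex.norm_conj]
        ring
    _ ≤ 2 * (‖a‖ * ‖c‖) := by
        gcongr 2 * ?_
        exact mul_le_of_le_one_right (by positivity) hb
    _ ≤ ‖a‖ ^ 2 + ‖c‖ ^ 2 := by linarith [two_mul_le_add_sq ‖a‖ ‖c‖]

theorem two_mul_re_circlePairing_mul_le (hp : ContinuousOn p (sphere 0 1))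
    (hg : ContinuousOn g (sphere 0 1)) (hq : ContinuousOn q (sphere 0 1))
    (hg1 : ∀ z ∈ sphere (0 : ℂ) 1, ‖g z‖ ≤ 1) :
    2 * (circlePairing p (g * q)).re ≤
      (∫ θ in (0)..(2 * Real.pi), ‖p (circleMap 0 1 θ)‖ ^ 2) +
        ∫ θ in (0)..(2 * Real.pi), ‖q (circleMap 0 1 θ)‖ ^ 2 := by
  have hsq {u : ℂ → ℂ} (hu : ContinuousOn u (sphere 0 1)) :
      IntervalIntegrable (fun θ => ‖u (circleMap 0 1 θ)‖ ^ 2) MeasureTheory.volume 0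
        (2 * Real.pi) :=
    ((continuous_comp_circleMap hu).norm.pow 2).intervalIntegrable _ _
  have hgq : ContinuousOn (g * q) (sphere 0 1) := hg.mul hq
  have hint := intervalIntegrable_conj_mul_comp_circleMap hp hgq
  rw [circlePairing, ← Complex.reCLM_apply, ← Complex.reCLM.intervalIntegral_comp_comm hint,
    ← intervalIntegral.integral_const_mul, ← intervalIntegral.integral_add (hsq hp) (hsq hq)]
  refine intervalIntegral.integral_mono_on (by positivity) ?_ ((hsq hp).add (hsq hq))
    fun θ _ => two_mul_re_conj_mul_mul_le (hg1 _ (circleMap_mem_sphere 0 zero_le_one θ))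
  exact (Complex.continuous_re.comp ((continuous_conj.comp (continuous_comp_circleMap hp)).mul
    (continuous_comp_circleMap hgq))).const_mul 2 |>.intervalIntegrable _ _

theorem circlePairing_self_le_of_circlePairing_mul_eq (hp : ContinuousOn p (sphere 0 1))
    (hg : ContinuousOn g (sphere 0 1)) (hq : ContinuousOn q (sphere 0 1))
    (hg1 : ∀ z ∈ sphere (0 : ℂ) 1, ‖g z‖ ≤ 1)
    (h : circlePairing p (g * q) = circlePairing q q) :
    circlePairing q q ≤ circlePairing p p := by
  have hle := two_mul_re_circlePairing_mul_le hp hg hq hg1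
  rw [h, circlePairing_self, ofReal_re] at hle
  rw [circlePairing_self, circlePairing_self, real_le_real]
  linarith

end CirclePairing

section Szego

variable {a : ℂ} {H : ℂ → ℂ} {n : ℕ} {lam : Fin n → ℂ}

theorem differentiableOn_inv_one_sub_conj_mul (ha : ‖a‖ < 1) :
    DifferentiableOn ℂ (fun z => (1 - conj a * z)⁻¹) (closedBall 0 1) := by
  refine ((differentiableOn_const 1).sub (differentiableOn_id.const_mul _)).inv fun z hz => ?_
  have : ‖conj a * z‖ < 1 := by
    rw [norm_mul, Complex.norm_conj]
    exact (mul_le_of_le_one_right (norm_nonneg a) (mem_closedBall_zero_iff.1 hz)).trans_lt ha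
  exact sub_ne_zero.2 fun h => by simp [← h] at this

theorem conj_inv_one_sub_conj_mul_of_norm_eq_one {ζ : ℂ} (hζ : ‖ζ‖ = 1) :
    conj (1 - conj a * ζ)⁻¹ = ζ * (ζ - a)⁻¹ := by
  have hζ0 : ζ ≠ 0 := norm_ne_zero_iff.1 (by simp [hζ])
  have hconj : conj ζ = ζ⁻¹ := by
    rw [inv_def, normSq_eq_norm_sq, hζ]
    simp
  rw [map_inv₀, map_sub, map_one, map_mul, conj_conj, hconj]
  field_simp

theorem circlePairing_inv_one_sub_conj_mul (hH : DifferentiableOn ℂ H (closedBall 0 1))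
    (ha : ‖a‖ < 1) :
    circlePairing (fun z => (1 - conj a * z)⁻¹) H = 2 * Real.pi * H a := by
  have hcauchy := hH.circleIntegral_sub_inv_smul (mem_ball_zero_iff.2 ha)
  have hintegrand (θ : ℝ) :
      deriv (circleMap 0 1) θ • ((circleMap 0 1 θ - a)⁻¹ • H (circleMap 0 1 θ)) =
        I * (conj (1 - conj a * circleMap 0 1 θ)⁻¹ * H (circleMap 0 1 θ)) := by
    rw [deriv_circleMap, conj_inv_one_sub_conj_mul_of_norm_eq_one (by simp), smul_eq_mul,
      smul_eq_mul]
    ring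
  simp_rw [circleIntegral, hintegrand, intervalIntegral.integral_const_mul] at hcauchy
  exact mul_left_cancel₀ I_ne_zero (hcauchy.trans (by simp only [smul_eq_mul]; ring))

noncomputable def szegoCombination (lam c : Fin n → ℂ) (z : ℂ) : ℂ :=
  ∑ i, conj (c i) * (1 - conj (lam i) * z)⁻¹

theorem differentiableOn_szegoCombination (hlam : ∀ i, ‖lam i‖ < 1) (c : Fin n → ℂ) :
    DifferentiableOn ℂ (szegoCombination lam c) (closedBall 0 1) :=
  DifferentiableOn.fun_sum fun i _ =>
    (differentiableOn_inv_one_sub_conj_mul (hlam i)).const_mul _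

theorem circlePairing_szegoCombination (hH : DifferentiableOn ℂ H (closedBall 0 1))
    (hlam : ∀ i, ‖lam i‖ < 1) (c : Fin n → ℂ) :
    circlePairing (szegoCombination lam c) H = 2 * Real.pi * ∑ i, c i * H (lam i) := by
  have hint (i : Fin n) := (intervalIntegrable_conj_mul_comp_circleMap
    ((differentiableOn_inv_one_sub_conj_mul (hlam i)).continuousOn.mono sphere_subset_closedBall)
    (hH.continuousOn.mono sphere_subset_closedBall)).const_mul (c i)
  simp only [circlePairing, szegoCombination, map_sum, map_mul, conj_conj, Finset.sum_mul,
    mul_assoc (c _)]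
  rw [intervalIntegral.integral_finsetSum fun i _ => hint i, Finset.mul_sum]
  refine Finset.sum_congr rfl fun i _ => ?_
  rw [intervalIntegral.integral_const_mul]
  exact (congrArg (c i * ·) (circlePairing_inv_one_sub_conj_mul hH (hlam i))).trans (by ring)

theorem circlePairing_szegoCombination_self (hlam : ∀ i, ‖lam i‖ < 1) (c : Fin n → ℂ) :
    circlePairing (szegoCombination lam c) (szegoCombination lam c) =
      2 * Real.pi * ∑ i, ∑ j, conj (c i) * c j * (1 - conj (lam i) * lam j)⁻¹ := by
  rw [circlePairing_szegoCombination (differentiableOn_szegoCombination hlam c) hlam,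
    Finset.sum_comm]
  simp only [szegoCombination, Finset.mul_sum, mul_assoc, mul_left_comm (c _)]

end Szego

theorem isPSDKernelOnDisk_pick_of_closedBall {g : ℂ → ℂ}
    (hg : DifferentiableOn ℂ g (closedBall 0 1)) (hg1 : ∀ z ∈ sphere (0 : ℂ) 1, ‖g z‖ ≤ 1) :
    IsPSDKernelOnDisk fun a b => (1 - conj (g a) * g b) / (1 - conj a * b) := by
  intro n lam hlam c
  set d : Fin n → ℂ := fun i => c i * g (lam i)
  have hU := differentiableOn_szegoCombination hlam c
  have hV := differentiableOn_szegoCombination hlam d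
  have hadjoint : circlePairing (szegoCombination lam c) (g * szegoCombination lam d) =
      circlePairing (szegoCombination lam d) (szegoCombination lam d) := by
    rw [circlePairing_szegoCombination (hg.mul hV) hlam,
      circlePairing_szegoCombination hV hlam]
    simp only [d, Pi.mul_apply, mul_assoc]
  have hle := circlePairing_self_le_of_circlePairing_mul_eq
    (hU.continuousOn.mono sphere_subset_closedBall)
    (hg.continuousOn.mono sphere_subset_closedBall)
    (hV.continuousOn.mono sphere_subset_closedBall) hg1 hadjoint
  rw [circlePairing_szegoCombination_self hlam, circlePairing_szegoCombination_self hlam] at hle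
  have hform : ∑ i, ∑ j, conj (c i) * c j * ((1 - conj (g (lam i)) * g (lam j)) /
        (1 - conj (lam i) * lam j)) =
      ∑ i, ∑ j, conj (c i) * c j * (1 - conj (lam i) * lam j)⁻¹ -
        ∑ i, ∑ j, conj (d i) * d j * (1 - conj (lam i) * lam j)⁻¹ := by
    simp only [d, ← Finset.sum_sub_distrib, map_mul]
    exact Finset.sum_congr rfl fun i _ => Finset.sum_congr rfl fun j _ => by ring
  rw [hform, sub_nonneg]
  have hpi : (0 : ℂ) < 2 * Real.pi := by exact_mod_cast Real.two_pi_pos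
  exact le_of_mul_le_mul_left hle hpi

theorem isPSDKernelOnDisk_pick {g : ℂ → ℂ} (hg : DifferentiableOn ℂ g (ball 0 1))
    (hg1 : ∀ z ∈ ball (0 : ℂ) 1, ‖g z‖ ≤ 1) :
    IsPSDKernelOnDisk fun a b => (1 - conj (g a) * g b) / (1 - conj a * b) := by
  intro n lam hlam c
  have hdilate {r : ℝ} (hr : r ∈ Set.Ioo 0 1) {z : ℂ} (hz : z ∈ closedBall (0 : ℂ) 1) :
      (r : ℂ) * z ∈ ball (0 : ℂ) 1 := by
    rw [mem_ball_zero_iff, norm_mul, norm_real, Real.norm_of_nonneg hr.1.le]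
    exact (mul_le_of_le_one_right hr.1.le (mem_closedBall_zero_iff.1 hz)).trans_lt hr.2
  have hnonneg (r : ℝ) (hr : r ∈ Set.Ioo 0 1) :=
    isPSDKernelOnDisk_pick_of_closedBall (g := fun z => g (r * z))
      (hg.comp (differentiableOn_id.const_mul _) fun z hz => hdilate hr hz)
      (fun z hz => hg1 _ (hdilate hr (sphere_subset_closedBall hz))) n lam hlam c
  have hg_dilate (i : Fin n) : Tendsto (fun r : ℝ => g (r * lam i)) (𝓝 1) (𝓝 (g (lam i))) := by
    have hlim : Tendsto (fun r : ℝ => (r : ℂ) * lam i) (𝓝 1) (𝓝 (lam i)) := by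
      simpa using (continuous_ofReal.tendsto 1).mul_const (lam i)
    exact (hg.continuousOn.continuousAt
      (isOpen_ball.mem_nhds (mem_ball_zero_iff.2 (hlam i)))).tendsto.comp hlim
  refine ge_of_tendsto ?_ (eventually_of_mem (Ioo_mem_nhdsLT zero_lt_one) hnonneg)
  refine (tendsto_finsetSum _ fun i _ => tendsto_finsetSum _ fun j _ => ?_).mono_left
    nhdsWithin_le_nhds
  exact tendsto_const_nhds.mul ((tendsto_const_nhds.sub
    (((continuous_conj.tendsto _).comp (hg_dilate i)).mul (hg_dilate j))).div_const _)

theorem isPSDKernelOnDisk_two_mul_sub_sq {f : ℂ → ℂ} (hf : DifferentiableOn ℂ f (ball 0 1))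
    (hf2 : ∀ z ∈ ball (0 : ℂ) 1, ‖f z‖ ≤ Real.sqrt 2) :
    IsPSDKernelOnDisk fun a b =>
      (2 * conj (f a) * f b - conj (f a) ^ 2 * f b ^ 2) / (1 - conj a * b) ^ 2 := by
  set s : ℂ := ((Real.sqrt 2 : ℝ) : ℂ)
  have hs : s ^ 2 = 2 := by simp [s, ← ofReal_pow]
  have hs0 : s ≠ 0 := by simp [s]
  have hs_conj : conj s = s := conj_ofReal _
  have hszego := isPSDKernelOnDisk_pick (g := 0) (differentiableOn_const 0) (by simp)
  have hpick := isPSDKernelOnDisk_pick (g := fun z => f z / s) (hf.div_const s) fun z hz => by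
    rw [norm_div, norm_real, Real.norm_of_nonneg (Real.sqrt_nonneg 2)]
    exact div_le_one_of_le₀ (hf2 z hz) (Real.sqrt_nonneg 2)
  refine (((isPSDKernelOnDisk_conj_mul fun z => s * f z).mul hpick).mul hszego).congr
    fun a b _ _ => ?_
  simp only [map_mul, map_div₀, hs_conj, Pi.zero_apply, map_zero, mul_zero, sub_zero]
  field_simp
  linear_combination conj (f a) * f b * ((1 - conj a * b) ^ 2)⁻¹ * hs

theorem isPSDKernelOnDisk_one_sub_conj_mul_sq {f : ℂ → ℂ}
    (hf : DifferentiableOn ℂ f (ball 0 1)) (hf1 : ∀ z ∈ ball (0 : ℂ) 1, 1 ≤ ‖f z‖) :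
    IsPSDKernelOnDisk fun a b =>
      (1 - 2 * conj (f a) * f b + conj (f a) ^ 2 * f b ^ 2) / (1 - conj a * b) ^ 2 := by
  have hf0 (z : ℂ) (hz : z ∈ ball (0 : ℂ) 1) : f z ≠ 0 :=
    norm_pos_iff.1 (one_pos.trans_le (hf1 z hz))
  have hpick := isPSDKernelOnDisk_pick (g := fun z => (f z)⁻¹) (hf.inv hf0) fun z hz => by
    rw [norm_inv]
    exact inv_le_one_of_one_le₀ (hf1 z hz)
  refine ((isPSDKernelOnDisk_conj_mul fun z => f z ^ 2).mul (hpick.mul hpick)).congr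
    fun a b ha hb => ?_
  have ha0 : conj (f a) ≠ 0 := (map_ne_zero _).2 (hf0 a (mem_ball_zero_iff.2 ha))
  have hb0 := hf0 b (mem_ball_zero_iff.2 hb)
  simp only [map_pow, map_inv₀]
  field_simp
  ring

theorem psd_pair_of_annulus_valued_general
    (f : ℂ → ℂ) (hf : DifferentiableOn ℂ f (ball (0 : ℂ) 1))
    (hA : ∀ lam ∈ ball (0 : ℂ) 1,
        1 < ‖f lam‖ ∧ ‖f lam‖ ≤ Real.sqrt 2) :
    IsPSDKernelOnDisk (fun lam z =>
        (2 * (starRingEnd ℂ) (f lam) * f z - ((starRingEnd ℂ) (f lam)) ^ 2 * (f z) ^ 2) /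
          (1 - (starRingEnd ℂ) lam * z) ^ 2) ∧
      IsPSDKernelOnDisk (fun lam z =>
        (1 - 2 * (starRingEnd ℂ) (f lam) * f z + ((starRingEnd ℂ) (f lam)) ^ 2 * (f z) ^ 2) /
          (1 - (starRingEnd ℂ) lam * z) ^ 2) :=
  ⟨isPSDKernelOnDisk_two_mul_sub_sq hf fun z hz => (hA z hz).2,
    isPSDKernelOnDisk_one_sub_conj_mul_sq hf fun z hz => (hA z hz).1.le⟩

/-- If `f` is bounded holomorphic with `1 < |f| ≤ √2` on the disk, then both kernels
`K₁` and `K₂` are positive semi-definite. -/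
theorem psd_pair_of_annulus_valued
    (f : ℂ → ℂ) (hf : DifferentiableOn ℂ f (ball (0 : ℂ) 1))
    (hb : ∃ M : ℝ, ∀ z ∈ ball (0 : ℂ) 1, ‖f z‖ ≤ M)
    (hA : ∀ lam ∈ ball (0 : ℂ) 1,
        1 < ‖f lam‖ ∧ ‖f lam‖ ≤ Real.sqrt 2) :
    IsPSDKernelOnDisk (fun lam z =>
        (2 * (starRingEnd ℂ) (f lam) * f z - ((starRingEnd ℂ) (f lam)) ^ 2 * (f z) ^ 2) /
          (1 - (starRingEnd ℂ) lam * z) ^ 2) ∧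
      IsPSDKernelOnDisk (fun lam z =>
        (1 - 2 * (starRingEnd ℂ) (f lam) * f z + ((starRingEnd ℂ) (f lam)) ^ 2 * (f z) ^ 2) /
          (1 - (starRingEnd ℂ) lam * z) ^ 2) :=
  psd_pair_of_annulus_valued_general f hf hA
end

section
/- Let φ be a bounded holomorphic function on the open unit disk 𝔻 with |φ(λ)| > 1 for all λ ∈ 𝔻. Then the kernel K(λ, z) = (conj(φ(λ))·φ(z) − 1) / (1 − conj(λ)·z) is positive semi-definite on 𝔻. (This is the reproducing kernel of the sub-Hardy Hilbert space 𝒦(φ) = ℳ(√(T_φ T_φ* − I)).) -/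
open Complex Metric ComplexOrder

/-!
With `ψ = φ⁻¹`, holomorphic and bounded by `1`, the kernel is `conj (φ λ) φ z` times the Pick
kernel `(1 - conj (ψ λ) ψ z) / (1 - conj λ z)`, so it suffices to show that the latter is
positive. On the circle of radius `r < 1`, Cauchy's formula makes the Szegő kernels
`k_a z = (1 - conj a z / r²)⁻¹` reproducing, so that the quadratic form of the Pick kernel
with `conj λ z` replaced by `conj λ z / r²` equals `(‖v‖² - ‖u‖²) / 2π` in `L²` of the circle,
where `v = ∑ c_j k_{λ_j}` and `u = ∑ c_j ψ(λ_j) k_{λ_j}`. Reproducing also gives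
`⟪u, ψ v⟫ = ‖u‖²`, hence `‖u‖ ≤ ‖v‖` because `|ψ| ≤ 1`. Finally let `r → 1`.
-/

open intervalIntegral
open scoped ComplexConjugate

/-- On `z = r e^{iθ}` we have `circleKernel r b θ dθ = dz / (I (z - b))`, the Cauchy kernel, while
its conjugate is the Szegő kernel `(1 - conj b z / r²)⁻¹` (`conj_circleKernel`). -/
noncomputable def circleKernel (r : ℝ) (b : ℂ) (θ : ℝ) : ℂ :=
  circleMap 0 r θ / (circleMap 0 r θ - b)

lemma one_sub_conj_mul_div_sq_ne_zero {r : ℝ} {a z : ℂ} (ha : ‖a‖ < r) (hz : ‖z‖ ≤ r) :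
    1 - conj a * z / (r : ℂ) ^ 2 ≠ 0 := by
  have hr : 0 < r := (norm_nonneg a).trans_lt ha
  have hlt : ‖conj a * z / (r : ℂ) ^ 2‖ < 1 := by
    rw [norm_div, norm_mul, norm_conj, norm_pow, norm_real, Real.norm_of_nonneg hr.le,
      div_lt_one (by positivity)]
    nlinarith [norm_nonneg a, norm_nonneg z]
  intro h
  rw [← sub_eq_zero.mp h, norm_one] at hlt
  exact hlt.false

lemma circleMap_sub_ne_zero {r : ℝ} {b : ℂ} (hb : ‖b‖ < r) (θ : ℝ) : circleMap 0 r θ - b ≠ 0 := by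
  have hr : 0 < r := (norm_nonneg b).trans_lt hb
  rw [sub_ne_zero]
  rintro rfl
  rw [norm_circleMap_zero, abs_of_pos hr] at hb
  exact hb.false

lemma continuous_circleKernel {r : ℝ} {b : ℂ} (hb : ‖b‖ < r) : Continuous (circleKernel r b) :=
  (continuous_circleMap 0 r).div ((continuous_circleMap 0 r).sub continuous_const)
    (circleMap_sub_ne_zero hb)

lemma conj_circleKernel {r : ℝ} {b : ℂ} (hb : ‖b‖ < r) (θ : ℝ) :
    conj (circleKernel r b θ) = (1 - conj b * circleMap 0 r θ / (r : ℂ) ^ 2)⁻¹ := by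
  have hr : 0 < r := (norm_nonneg b).trans_lt hb
  set w := circleMap 0 r θ
  have hw : w ≠ 0 := circleMap_ne_center hr.ne'
  have hwb : conj w - conj b ≠ 0 := by
    rw [← map_sub, map_ne_zero]; exact circleMap_sub_ne_zero hb θ
  have hconj : conj w = (r : ℂ) ^ 2 / w := by
    rw [eq_div_iff hw, mul_comm, mul_conj', norm_circleMap_zero, abs_of_pos hr]
  rw [circleKernel, map_div₀, map_sub, ← inv_div]
  congr 1
  rw [hconj] at hwb ⊢
  field_simp

lemma integral_mul_circleKernel {r : ℝ} {h : ℂ → ℂ} (hh : DiffContOnCl ℂ h (ball 0 r)) {b : ℂ}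
    (hb : ‖b‖ < r) :
    ∫ θ in (0 : ℝ)..2 * Real.pi, h (circleMap 0 r θ) * circleKernel r b θ =
      2 * Real.pi * h b := by
  have cauchy := hh.circleIntegral_sub_inv_smul (mem_ball_zero_iff.mpr hb)
  simp only [circleIntegral, deriv_circleMap, smul_eq_mul] at cauchy
  calc ∫ θ in (0 : ℝ)..2 * Real.pi, h (circleMap 0 r θ) * circleKernel r b θ
      = (∫ θ in (0 : ℝ)..2 * Real.pi,
          circleMap 0 r θ * I * ((circleMap 0 r θ - b)⁻¹ * h (circleMap 0 r θ))) / I := by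
        rw [← integral_div]
        congr 1 with θ
        rw [circleKernel]
        field_simp
    _ = 2 * Real.pi * h b := by
        rw [cauchy]
        field_simp

lemma integral_conj_circleKernel_mul {r : ℝ} {g : ℂ → ℂ} (hg : DiffContOnCl ℂ g (ball 0 r))
    {a b : ℂ} (ha : ‖a‖ < r) (hb : ‖b‖ < r) :
    ∫ θ in (0 : ℝ)..2 * Real.pi,
        conj (circleKernel r a θ) * (g (circleMap 0 r θ) * circleKernel r b θ) =
      2 * Real.pi * (g b / (1 - conj a * b / (r : ℂ) ^ 2)) := by
  have hr : 0 < r := (norm_nonneg a).trans_lt ha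
  have hden : DiffContOnCl ℂ (fun z => (1 - conj a * z / (r : ℂ) ^ 2)⁻¹) (ball 0 r) := by
    refine DiffContOnCl.inv (by fun_prop : Differentiable ℂ _).diffContOnCl fun z hz => ?_
    rw [closure_ball 0 hr.ne', mem_closedBall_zero_iff] at hz
    exact one_sub_conj_mul_div_sq_ne_zero ha hz
  have := integral_mul_circleKernel (hden.smul hg) hb
  simp only [smul_eq_mul] at this
  rw [div_eq_inv_mul, ← this]
  congr 1 with θ
  rw [conj_circleKernel ha, mul_assoc]

lemma integral_conj_sum_mul_sum {ι : Type*} [Fintype ι] {a b : ℝ} {e f : ι → ℝ → ℂ}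
    (he : ∀ i, Continuous (e i)) (hf : ∀ i, Continuous (f i)) (c d : ι → ℂ) :
    ∫ θ in a..b, conj (∑ i, c i * e i θ) * ∑ j, d j * f j θ =
      ∑ i, ∑ j, conj (c i) * d j * ∫ θ in a..b, conj (e i θ) * f j θ := by
  have hcont : ∀ i j, Continuous (fun θ => conj (c i) * d j * (conj (e i θ) * f j θ)) :=
    fun i j => continuous_const.mul ((continuous_conj.comp (he i)).mul (hf j))
  simp only [map_sum, map_mul, Finset.sum_mul_sum, mul_mul_mul_comm (conj (c _))]
  rw [integral_finsetSum fun i _ =>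
    (continuous_finsetSum _ fun j _ => hcont i j).intervalIntegrable _ _]
  refine Finset.sum_congr rfl fun i _ => ?_
  rw [integral_finsetSum fun j _ => (hcont i j).intervalIntegrable _ _]
  simp only [integral_const_mul]

lemma integral_conj_mul_self {a b : ℝ} (u : ℝ → ℂ) :
    ∫ θ in a..b, conj (u θ) * u θ = ((∫ θ in a..b, ‖u θ‖ ^ 2 : ℝ) : ℂ) := by
  simp only [conj_mul', ← ofReal_pow, intervalIntegral.integral_ofReal]

lemma integral_norm_sq_le_of_integral_conj_mul_eq {a b : ℝ} (hab : a ≤ b) {u v p : ℝ → ℂ}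
    (hu : Continuous u) (hv : Continuous v) (hp : Continuous p) (hp1 : ∀ θ, ‖p θ‖ ≤ 1)
    (h : ∫ θ in a..b, conj (u θ) * (p θ * v θ) = ∫ θ in a..b, conj (u θ) * u θ) :
    ∫ θ in a..b, ‖u θ‖ ^ 2 ≤ ∫ θ in a..b, ‖v θ‖ ^ 2 := by
  have hu2 : IntervalIntegrable (fun θ => ‖u θ‖ ^ 2) MeasureTheory.volume a b :=
    (hu.norm.pow 2).intervalIntegrable _ _
  have hv2 : IntervalIntegrable (fun θ => ‖v θ‖ ^ 2) MeasureTheory.volume a b :=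
    (hv.norm.pow 2).intervalIntegrable _ _
  have hamgm : ∀ θ, ‖conj (u θ) * (p θ * v θ)‖ ≤ (‖u θ‖ ^ 2 + ‖v θ‖ ^ 2) / 2 := fun θ => by
    rw [norm_mul, norm_mul, norm_conj]
    nlinarith [sq_nonneg (‖u θ‖ - ‖v θ‖), hp1 θ, norm_nonneg (u θ), norm_nonneg (v θ),
      mul_nonneg (norm_nonneg (u θ)) (norm_nonneg (v θ))]
  have key : ∫ θ in a..b, ‖u θ‖ ^ 2 ≤ ∫ θ in a..b, (‖u θ‖ ^ 2 + ‖v θ‖ ^ 2) / 2 :=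
    calc ∫ θ in a..b, ‖u θ‖ ^ 2
        ≤ ‖∫ θ in a..b, conj (u θ) * (p θ * v θ)‖ := by
          rw [h, integral_conj_mul_self, norm_real, Real.norm_eq_abs]; exact le_abs_self _
      _ ≤ ∫ θ in a..b, ‖conj (u θ) * (p θ * v θ)‖ := norm_integral_le_integral_norm hab
      _ ≤ ∫ θ in a..b, (‖u θ‖ ^ 2 + ‖v θ‖ ^ 2) / 2 :=
          integral_mono_on hab
            (((continuous_conj.comp hu).mul (hp.mul hv)).norm.intervalIntegrable _ _)
            ((hu2.add hv2).div_const 2) fun θ _ => hamgm θ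
  rw [integral_div, integral_add hu2 hv2] at key
  linarith

lemma integral_conj_sum_circleKernel_mul_sum {ι : Type*} [Fintype ι] {r : ℝ} (hr : 0 < r)
    {g : ℂ → ℂ} (hg : DiffContOnCl ℂ g (ball 0 r)) {lam : ι → ℂ} (hlam : ∀ i, ‖lam i‖ < r)
    (c d : ι → ℂ) :
    ∫ θ in (0 : ℝ)..2 * Real.pi, conj (∑ i, c i * circleKernel r (lam i) θ) *
        ∑ j, d j * (g (circleMap 0 r θ) * circleKernel r (lam j) θ) =
      2 * Real.pi *
        ∑ i, ∑ j, conj (c i) * d j * (g (lam j) / (1 - conj (lam i) * lam j / (r : ℂ) ^ 2)) := by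
  have hgc : Continuous fun θ => g (circleMap 0 r θ) :=
    hg.continuousOn_ball.comp_continuous (continuous_circleMap 0 r) fun θ =>
      sphere_subset_closedBall (circleMap_mem_sphere 0 hr.le θ)
  rw [integral_conj_sum_mul_sum (e := fun i => circleKernel r (lam i))
    (f := fun j θ => g (circleMap 0 r θ) * circleKernel r (lam j) θ)
    (fun i => continuous_circleKernel (hlam i))
    (fun j => hgc.mul (continuous_circleKernel (hlam j))), Finset.mul_sum]
  simp only [Finset.mul_sum, integral_conj_circleKernel_mul hg (hlam _) (hlam _)]
  exact Finset.sum_congr rfl fun i _ => Finset.sum_congr rfl fun j _ => by ring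

noncomputable def pickKernel (ψ : ℂ → ℂ) (r : ℝ) (a z : ℂ) : ℂ :=
  (1 - conj (ψ a) * ψ z) / (1 - conj a * z / (r : ℂ) ^ 2)

theorem pickKernel_sum_nonneg_of_circle {ι : Type*} [Fintype ι] {r : ℝ} (hr : 0 < r)
    {ψ : ℂ → ℂ} (hψ : DiffContOnCl ℂ ψ (ball 0 r)) (hψ1 : ∀ θ, ‖ψ (circleMap 0 r θ)‖ ≤ 1)
    {lam : ι → ℂ} (hlam : ∀ i, ‖lam i‖ < r) (c : ι → ℂ) :
    0 ≤ ∑ i, ∑ j, conj (c i) * c j * pickKernel ψ r (lam i) (lam j) := by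
  set d := fun j => c j * ψ (lam j)
  have hψc : Continuous fun θ => ψ (circleMap 0 r θ) :=
    hψ.continuousOn_ball.comp_continuous (continuous_circleMap 0 r) fun θ =>
      sphere_subset_closedBall (circleMap_mem_sphere 0 hr.le θ)
  have hcont : ∀ c : ι → ℂ, Continuous fun θ => ∑ j, c j * circleKernel r (lam j) θ :=
    fun c => continuous_finsetSum _ fun j _ =>
      continuous_const.mul (continuous_circleKernel (hlam j))
  have hvv := integral_conj_sum_circleKernel_mul_sum hr (g := fun _ => 1) diffContOnCl_const
    hlam c c
  have huu := integral_conj_sum_circleKernel_mul_sum hr (g := fun _ => 1) diffContOnCl_const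
    hlam d d
  have hcross := integral_conj_sum_circleKernel_mul_sum hr hψ hlam d c
  simp only [one_mul] at hvv huu
  set u := fun θ => ∑ j, d j * circleKernel r (lam j) θ
  set v := fun θ => ∑ j, c j * circleKernel r (lam j) θ
  have hle : ∫ θ in (0 : ℝ)..2 * Real.pi, ‖u θ‖ ^ 2 ≤ ∫ θ in (0 : ℝ)..2 * Real.pi, ‖v θ‖ ^ 2 := by
    refine integral_norm_sq_le_of_integral_conj_mul_eq Real.two_pi_pos.le
      (hcont d) (hcont c) hψc hψ1 ?_
    calc ∫ θ in (0 : ℝ)..2 * Real.pi, conj (u θ) * (ψ (circleMap 0 r θ) * v θ)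
        = ∫ θ in (0 : ℝ)..2 * Real.pi, conj (u θ) *
            ∑ j, c j * (ψ (circleMap 0 r θ) * circleKernel r (lam j) θ) :=
          integral_congr fun θ _ => by
            simp only [v, Finset.mul_sum, mul_left_comm (ψ (circleMap 0 r θ))]
      _ = ∫ θ in (0 : ℝ)..2 * Real.pi, conj (u θ) * u θ := by
          rw [hcross, huu]
          refine congrArg _ (Finset.sum_congr rfl fun i _ => Finset.sum_congr rfl fun j _ => ?_)
          simp only [d]
          ring
  have hform : ∑ i, ∑ j, conj (c i) * c j * pickKernel ψ r (lam i) (lam j) =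
      ∑ i, ∑ j, conj (c i) * c j * (1 / (1 - conj (lam i) * lam j / (r : ℂ) ^ 2)) -
        ∑ i, ∑ j, conj (d i) * d j * (1 / (1 - conj (lam i) * lam j / (r : ℂ) ^ 2)) := by
    rw [← Finset.sum_sub_distrib]
    refine Finset.sum_congr rfl fun i _ => ?_
    rw [← Finset.sum_sub_distrib]
    refine Finset.sum_congr rfl fun j _ => ?_
    simp only [pickKernel, d, map_mul]
    ring
  rw [integral_conj_mul_self] at hvv huu
  have h2π : (0 : ℂ) < 2 * Real.pi := by exact_mod_cast Real.two_pi_pos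
  rw [hform, ← mul_le_mul_iff_of_pos_left h2π, mul_zero, mul_sub, ← hvv, ← huu, ← ofReal_sub]
  exact zero_le_real.mpr (sub_nonneg.mpr hle)

theorem pickKernel_sum_nonneg {ι : Type*} [Fintype ι] {ψ : ℂ → ℂ}
    (hψ : DifferentiableOn ℂ ψ (ball 0 1)) (hψ1 : ∀ z ∈ ball (0 : ℂ) 1, ‖ψ z‖ ≤ 1)
    {lam : ι → ℂ} (hlam : ∀ i, ‖lam i‖ < 1) (c : ι → ℂ) :
    0 ≤ ∑ i, ∑ j, conj (c i) * c j * pickKernel ψ 1 (lam i) (lam j) := by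
  have hcont : ContinuousAt
      (fun r : ℝ => ∑ i, ∑ j, conj (c i) * c j * pickKernel ψ r (lam i) (lam j)) 1 := by
    refine tendsto_finsetSum _ fun i _ => tendsto_finsetSum _ fun j _ => ?_
    exact continuousAt_const.mul <| continuousAt_const.div
      (continuousAt_const.sub <| continuousAt_const.div
        (continuous_ofReal.continuousAt.pow 2) (by norm_num))
      (one_sub_conj_mul_div_sq_ne_zero (hlam i) (hlam j).le)
  have hradii : ∀ᶠ r in nhdsWithin (1 : ℝ) (Set.Iio 1), r < 1 ∧ 0 < r ∧ ∀ i, ‖lam i‖ < r :=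
    eventually_mem_nhdsWithin.and <| ((eventually_gt_nhds one_pos).and
      (Filter.eventually_all.mpr fun i => eventually_gt_nhds (hlam i))).filter_mono
        nhdsWithin_le_nhds
  refine ge_of_tendsto (hcont.tendsto.mono_left nhdsWithin_le_nhds) (hradii.mono ?_)
  rintro r ⟨hr1, hr, hlamr⟩
  have hsub : closedBall (0 : ℂ) r ⊆ ball 0 1 := closedBall_subset_ball hr1
  exact pickKernel_sum_nonneg_of_circle hr (hψ.diffContOnCl_ball hsub)
    (fun θ => hψ1 _ (hsub (sphere_subset_closedBall (circleMap_mem_sphere 0 hr.le θ)))) hlamr c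

theorem psd_kernel_of_K_phi_general
    (φ : ℂ → ℂ) (hφ : DifferentiableOn ℂ φ (ball (0 : ℂ) 1))
    (hgt : ∀ lam ∈ ball (0 : ℂ) 1, 1 < ‖φ lam‖) :
    IsPSDKernelOnDisk (fun lam z =>
        ((starRingEnd ℂ) (φ lam) * φ z - 1) / (1 - (starRingEnd ℂ) lam * z)) := by
  intro n lam hlam c
  have hφ0 : ∀ z ∈ ball (0 : ℂ) 1, φ z ≠ 0 := fun z hz =>
    norm_pos_iff.mp (one_pos.trans (hgt z hz))
  have hψ1 : ∀ z ∈ ball (0 : ℂ) 1, ‖(φ z)⁻¹‖ ≤ 1 := fun z hz => by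
    rw [norm_inv]
    exact inv_le_one_of_one_le₀ (hgt z hz).le
  convert pickKernel_sum_nonneg (hφ.inv hφ0) hψ1 hlam (fun i => c i * φ (lam i)) using 1
  refine Finset.sum_congr rfl fun i _ => Finset.sum_congr rfl fun j _ => ?_
  have hi := hφ0 _ (mem_ball_zero_iff.mpr (hlam i))
  have hj := hφ0 _ (mem_ball_zero_iff.mpr (hlam j))
  have hi' : conj (φ (lam i)) ≠ 0 := (map_ne_zero _).mpr hi
  simp only [pickKernel, Pi.inv_apply, map_mul, map_inv₀, ofReal_one, one_pow, div_one]
  field_simp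

/-- If `φ` is bounded holomorphic with `|φ| > 1` on the disk, then the kernel
`(conj(φ λ) φ z − 1)/(1 − conj λ · z)` is positive semi-definite. -/
theorem psd_kernel_of_K_phi
    (φ : ℂ → ℂ) (hφ : DifferentiableOn ℂ φ (ball (0 : ℂ) 1))
    (hb : ∃ M : ℝ, ∀ z ∈ ball (0 : ℂ) 1, ‖φ z‖ ≤ M)
    (hgt : ∀ lam ∈ ball (0 : ℂ) 1, 1 < ‖φ lam‖) :
    IsPSDKernelOnDisk (fun lam z =>
        ((starRingEnd ℂ) (φ lam) * φ z - 1) / (1 - (starRingEnd ℂ) lam * z)) :=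
  psd_kernel_of_K_phi_general φ hφ hgt
end
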